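/- arXiv:2201.04862 — 8 statements merged into one kernel-verified Lean document; each statement's English description precedes it below -/
import Mathlib

section
/- (Passivity of the dq-frame synchronization dynamics.) Let v_dq ∈ ℝ², let ũ : ℝ → ℝ, and let v̂ : ℝ → ℝ² be differentiable with v̂'(t) = ũ(t)·J₂·v̂(t), where J₂ := [[0, −1], [1, 0]]. Define the storage function H₁(w) := (1/2)‖w − v_dq‖² and the output ỹ₁(t) := −v_dqᵀ·J₂·v̂(t). Then for every t, the derivative of t ↦ H₁(v̂(t)) equals ỹ₁(t)·ũ(t). -/
open Real Matrix

/-- Proposition 1: passivity of the dq-frame synchronization dynamics.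
With storage H₁(w) = (1/2)‖w − v_dq‖² and output ỹ₁ = −v_dqᵀ J₂ v̂, along any
solution of v̂' = ũ·J₂·v̂ one has (d/dt) H₁(v̂(t)) = ỹ₁(t)·ũ(t). -/
theorem srf_pll_passivity (vdq : Fin 2 → ℝ) (utilde : ℝ → ℝ) (vhat : ℝ → Fin 2 → ℝ)
    (hv : ∀ t, HasDerivAt vhat
      (utilde t • (!![(0 : ℝ), -1; 1, 0]).mulVec (vhat t)) t) :
    let J₂ : Matrix (Fin 2) (Fin 2) ℝ := !![0, -1; 1, 0]
    let ytilde : ℝ → ℝ := fun t => -(vdq ⬝ᵥ J₂.mulVec (vhat t))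
    let H₁ : (Fin 2 → ℝ) → ℝ := fun w => (1 / 2) * ((w 0 - vdq 0) ^ 2 + (w 1 - vdq 1) ^ 2)
    ∀ t, HasDerivAt (fun s => H₁ (vhat s)) (ytilde t * utilde t) t := by
  intro J₂ ytilde H₁ t
  have h0 : HasDerivAt (fun s => vhat s 0) (-(utilde t * vhat t 1)) t := by
    have := (hasDerivAt_pi.mp (hv t)) 0
    simpa [Matrix.mulVec, dotProduct, Fin.sum_univ_two] using this
  have h1 : HasDerivAt (fun s => vhat s 1) (utilde t * vhat t 0) t := by
    have := (hasDerivAt_pi.mp (hv t)) 1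
    simpa [Matrix.mulVec, dotProduct, Fin.sum_univ_two] using this
  have hH : HasDerivAt (fun s => H₁ (vhat s))
      ((1/2) * ((2 * (vhat t 0 - vdq 0) * (-(utilde t * vhat t 1)))
        + 2 * (vhat t 1 - vdq 1) * (utilde t * vhat t 0))) t := by
    have e0 : HasDerivAt (fun s => (vhat s 0 - vdq 0) ^ 2)
        (2 * (vhat t 0 - vdq 0) * (-(utilde t * vhat t 1))) t := by
      simpa using ((h0.sub_const (vdq 0)).fun_pow 2)
    have e1 : HasDerivAt (fun s => (vhat s 1 - vdq 1) ^ 2)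
        (2 * (vhat t 1 - vdq 1) * (utilde t * vhat t 0)) t := by
      simpa using ((h1.sub_const (vdq 1)).fun_pow 2)
    exact (e0.add e1).const_mul (1/2)
  convert hH using 1
  simp [ytilde, J₂, Matrix.mulVec, dotProduct, Fin.sum_univ_two]
  ring
end

section
/- (Lyapunov decrease for the generalized SRF-PLL, Proposition 2.) Let V > 0, γ := √(3/2), ω ∈ ℝ, K_P, K_I > 0, v_dq ∈ ℝ² with ‖v_dq‖ = γV, and let Φ : ℝ → ℝ satisfy Φ(0) = 0 and s·Φ(s) > 0 for all s ≠ 0. Let (v̂, ω̂) : ℝ → ℝ² × ℝ be a differentiable solution of the closed-loop system v̂'(t) = (û(t) − ω)·J₂·v̂(t), ω̂'(t) = −K_I·ỹ₁(t), where ỹ₁(t) := −v_dqᵀ·J₂·v̂(t) and û(t) := −K_P·Φ(ỹ₁(t)) + ω̂(t). Then the function W₁(t) := (1/2)‖v̂(t) − v_dq‖² + (1/(2K_I))(ω̂(t) − ω)² has derivative W₁'(t) = −K_P·Φ(ỹ₁(t))·ỹ₁(t) ≤ 0 for all t; in particular W₁ is nonincreasing and every solution is bounded. -/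
open Real Matrix

/-- Proposition 2: Lyapunov decrease for the generalized SRF-PLL.
Along any solution of the closed loop v̂' = (û − ω)·J₂·v̂, ω̂' = −K_I·ỹ₁, with
ỹ₁ = −v_dqᵀ J₂ v̂ and û = −K_P·Φ(ỹ₁) + ω̂, the function
W₁ = (1/2)‖v̂ − v_dq‖² + (1/(2K_I))(ω̂ − ω)² satisfies W₁' = −K_P·Φ(ỹ₁)·ỹ₁ ≤ 0;
in particular W₁ is nonincreasing and the solution is (forward) bounded. -/
theorem gSRF_PLL_lyapunov (V ω KP KI : ℝ) (hV : 0 < V) (hKP : 0 < KP) (hKI : 0 < KI)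
    (vdq : Fin 2 → ℝ)
    (hvdq : Real.sqrt ((vdq 0) ^ 2 + (vdq 1) ^ 2) = Real.sqrt (3 / 2) * V)
    (Φ : ℝ → ℝ) (hΦ0 : Φ 0 = 0) (hΦ : ∀ s : ℝ, s ≠ 0 → 0 < Φ s * s)
    (vhat : ℝ → Fin 2 → ℝ) (ωhat : ℝ → ℝ) (ytilde : ℝ → ℝ)
    (hy : ∀ t, ytilde t = -(vdq ⬝ᵥ (!![(0 : ℝ), -1; 1, 0]).mulVec (vhat t)))
    (hv : ∀ t, HasDerivAt vhat
      (((-KP * Φ (ytilde t) + ωhat t) - ω) • (!![(0 : ℝ), -1; 1, 0]).mulVec (vhat t)) t)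
    (hω : ∀ t, HasDerivAt ωhat (-KI * ytilde t) t) :
    let W₁ : ℝ → ℝ := fun s =>
      (1 / 2) * ((vhat s 0 - vdq 0) ^ 2 + (vhat s 1 - vdq 1) ^ 2) +
        (1 / (2 * KI)) * (ωhat s - ω) ^ 2
    (∀ t, HasDerivAt W₁ (-KP * Φ (ytilde t) * ytilde t) t ∧
        -KP * Φ (ytilde t) * ytilde t ≤ 0) ∧
    (∀ s t : ℝ, s ≤ t → W₁ t ≤ W₁ s) ∧
    (∃ M : ℝ, ∀ t : ℝ, 0 ≤ t →
      Real.sqrt ((vhat t 0) ^ 2 + (vhat t 1) ^ 2 + (ωhat t) ^ 2) ≤ M) := by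
  intro W₁
  have hy' : ∀ t, ytilde t = vdq 0 * vhat t 1 - vdq 1 * vhat t 0 := by
    intro t
    rw [hy t]
    simp [Matrix.mulVec, dotProduct, Fin.sum_univ_two]
    ring
  have hKI2 : (0:ℝ) < 1 / (2 * KI) := by positivity
  have hderiv : ∀ t, HasDerivAt W₁ (-KP * Φ (ytilde t) * ytilde t) t := by
    intro t
    set c : ℝ := (-KP * Φ (ytilde t) + ωhat t) - ω with hc
    have h0 : HasDerivAt (fun s => vhat s 0) (c * (-(vhat t 1))) t := by
      have h := (hasDerivAt_pi.mp (hv t)) 0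
      refine h.congr_deriv ?_
      simp [Matrix.mulVec, dotProduct, Fin.sum_univ_two, hc]
    have h1 : HasDerivAt (fun s => vhat s 1) (c * (vhat t 0)) t := by
      have h := (hasDerivAt_pi.mp (hv t)) 1
      refine h.congr_deriv ?_
      simp [Matrix.mulVec, dotProduct, Fin.sum_univ_two, hc]
    have H : HasDerivAt W₁
        ((1/2) * ((2 * (vhat t 0 - vdq 0) ^ 1 * (c * (-(vhat t 1)))) +
          (2 * (vhat t 1 - vdq 1) ^ 1 * (c * (vhat t 0)))) +
         (1/(2*KI)) * (2 * (ωhat t - ω) ^ 1 * (-KI * ytilde t))) t := by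
      exact ((((h0.sub_const (vdq 0)).pow 2).add ((h1.sub_const (vdq 1)).pow 2)).const_mul
        (1/2)).add ((((hω t).sub_const ω).pow 2).const_mul (1/(2*KI)))
    convert H using 1
    set p := Φ (ytilde t) with hp
    rw [hy' t, hc]
    field_simp
    ring
  have hnonpos : ∀ t, -KP * Φ (ytilde t) * ytilde t ≤ 0 := by
    intro t
    rcases eq_or_ne (ytilde t) 0 with h | h
    · simp [h]
    · have := hΦ _ h
      nlinarith
  have hanti : Antitone W₁ := by
    apply antitone_of_deriv_nonpos
    · exact fun t => (hderiv t).differentiableAt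
    · intro t
      rw [(hderiv t).deriv]
      exact hnonpos t
  refine ⟨fun t => ⟨hderiv t, hnonpos t⟩, fun s t hst => hanti hst, ?_⟩
  have key2 : ∀ (x y z c C : ℝ), 0 < c → 1/2*(x+y) + 1/(2*c)*z ≤ C → 0 ≤ x → 0 ≤ y →
      0 ≤ z → x ≤ 2*C ∧ y ≤ 2*C ∧ z ≤ 2*c*C := by
    intro x y z c C hc h hx hy hz
    have hz' : 0 ≤ 1/(2*c)*z := by positivity
    have h2 : 1/(2*c)*z ≤ C := by linarith
    refine ⟨by linarith, by linarith, ?_⟩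
    have := mul_le_mul_of_nonneg_left h2 (le_of_lt (by positivity : (0:ℝ) < 2*c))
    calc z = (2*c) * (1/(2*c)*z) := by field_simp
      _ ≤ (2*c) * C := this
      _ = 2*c*C := by ring
  have key : ∀ (x a r : ℝ), (x - a) ^ 2 ≤ r → x ^ 2 ≤ (Real.sqrt r + |a|) ^ 2 := by
    intro x a r h
    have h1 : |x - a| ≤ Real.sqrt r := by
      rw [← Real.sqrt_sq_eq_abs]
      exact Real.sqrt_le_sqrt h
    have h2 : |x| ≤ Real.sqrt r + |a| := by
      calc |x| = |(x - a) + a| := by ring_nf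
        _ ≤ |x - a| + |a| := abs_add_le _ _
        _ ≤ Real.sqrt r + |a| := by linarith
    calc x ^ 2 = |x| ^ 2 := (sq_abs x).symm
      _ ≤ (Real.sqrt r + |a|) ^ 2 := pow_le_pow_left₀ (abs_nonneg x) h2 2
  refine ⟨Real.sqrt ((Real.sqrt (2 * W₁ 0) + |vdq 0|) ^ 2 +
      (Real.sqrt (2 * W₁ 0) + |vdq 1|) ^ 2 + (Real.sqrt (2 * KI * W₁ 0) + |ω|) ^ 2),
    fun t ht => ?_⟩
  have hWt : W₁ t ≤ W₁ 0 := hanti ht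
  simp only [W₁] at hWt
  obtain ⟨hd0, hd1, hdω⟩ := key2 _ _ _ _ _ hKI hWt (sq_nonneg _) (sq_nonneg _) (sq_nonneg _)
  have k0 := key _ (vdq 0) _ hd0
  have k1 := key _ (vdq 1) _ hd1
  have kω := key _ ω _ hdω
  apply Real.sqrt_le_sqrt
  simp only [W₁]
  linarith
end

section
/- (Equilibria of the generalized SRF-PLL closed loop.) Let V > 0, γ := √(3/2), ω ∈ ℝ, K_P, K_I > 0, v_dq ∈ ℝ² with ‖v_dq‖ = γV, and let Φ : ℝ → ℝ satisfy Φ(0) = 0 and s·Φ(s) > 0 for all s ≠ 0. A point (v̂, ω̂) ∈ ℝ² × ℝ with ‖v̂‖ = γV is an equilibrium of the closed-loop system v̂' = (û − ω)·J₂·v̂, ω̂' = −K_I·ỹ₁ (with ỹ₁ := −v_dqᵀ·J₂·v̂ and û := −K_P·Φ(ỹ₁) + ω̂), i.e. both right-hand sides vanish at (v̂, ω̂), if and only if (v̂, ω̂) = (v_dq, ω) or (v̂, ω̂) = (−v_dq, ω). -/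
open Real Matrix

set_option maxHeartbeats 1600000

/-- equilibria of the generalized SRF-PLL closed loop.
A point (v̂, ω̂) with ‖v̂‖ = γV is an equilibrium of
v̂' = (û − ω)·J₂·v̂, ω̂' = −K_I·ỹ₁ (ỹ₁ = −v_dqᵀ J₂ v̂, û = −K_P·Φ(ỹ₁) + ω̂)
iff (v̂, ω̂) = (v_dq, ω) or (v̂, ω̂) = (−v_dq, ω). -/
theorem gSRF_PLL_equilibria (V ω KP KI : ℝ) (hV : 0 < V) (hKP : 0 < KP) (hKI : 0 < KI)
    (vdq : Fin 2 → ℝ)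
    (hvdq : Real.sqrt ((vdq 0) ^ 2 + (vdq 1) ^ 2) = Real.sqrt (3 / 2) * V)
    (Φ : ℝ → ℝ) (hΦ0 : Φ 0 = 0) (hΦ : ∀ s : ℝ, s ≠ 0 → 0 < Φ s * s)
    (vhat : Fin 2 → ℝ) (ωhat : ℝ)
    (hnorm : Real.sqrt ((vhat 0) ^ 2 + (vhat 1) ^ 2) = Real.sqrt (3 / 2) * V) :
    let J₂ : Matrix (Fin 2) (Fin 2) ℝ := !![0, -1; 1, 0]
    let ytilde : ℝ := -(vdq ⬝ᵥ J₂.mulVec vhat)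
    (((-KP * Φ ytilde + ωhat) - ω) • J₂.mulVec vhat = 0 ∧ -KI * ytilde = 0) ↔
      ((vhat = vdq ∧ ωhat = ω) ∨ (vhat = -vdq ∧ ωhat = ω)) := by
  intro J₂ ytilde
  have hd : vdq 0 ^ 2 + vdq 1 ^ 2 = 3 / 2 * V ^ 2 := by
    have h1 : Real.sqrt ((vdq 0) ^ 2 + (vdq 1) ^ 2) ^ 2 = (vdq 0) ^ 2 + (vdq 1) ^ 2 :=
      Real.sq_sqrt (by positivity)
    rw [hvdq, mul_pow, Real.sq_sqrt (by norm_num : (0:ℝ) ≤ 3/2)] at h1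
    linarith
  have hh : vhat 0 ^ 2 + vhat 1 ^ 2 = 3 / 2 * V ^ 2 := by
    have h1 : Real.sqrt ((vhat 0) ^ 2 + (vhat 1) ^ 2) ^ 2 = (vhat 0) ^ 2 + (vhat 1) ^ 2 :=
      Real.sq_sqrt (by positivity)
    rw [hnorm, mul_pow, Real.sq_sqrt (by norm_num : (0:ℝ) ≤ 3/2)] at h1
    linarith
  have hr2 : (0:ℝ) < 3 / 2 * V ^ 2 := by positivity
  have hJ0 : J₂.mulVec vhat 0 = -vhat 1 := by
    simp [J₂, Matrix.mulVec, dotProduct, Fin.sum_univ_two]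
  have hJ1 : J₂.mulVec vhat 1 = vhat 0 := by
    simp [J₂, Matrix.mulVec, dotProduct, Fin.sum_univ_two]
  have hyt : ytilde = vdq 0 * vhat 1 - vdq 1 * vhat 0 := by
    simp only [ytilde, dotProduct, Fin.sum_univ_two, hJ0, hJ1]
    ring
  clear_value ytilde J₂
  constructor
  · rintro ⟨h1, h2⟩
    have hy0 : ytilde = 0 := by
      rcases mul_eq_zero.mp h2 with h | h
      · exact absurd h (by simpa using hKI.ne')
      · exact h
    have hΦy : Φ ytilde = 0 := by rw [hy0, hΦ0]
    have h10 := congrFun h1 0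
    have h11 := congrFun h1 1
    rw [Pi.smul_apply, hJ0] at h10; rw [Pi.smul_apply, hJ1] at h11
    simp [Pi.smul_apply, hJ0, hJ1, hΦy, smul_eq_mul, mul_eq_zero] at h10 h11
    have hω : ωhat = ω := by
      by_contra hne
      have hs : ωhat - ω ≠ 0 := sub_ne_zero.mpr hne
      have e0 : vhat 1 = 0 := by
        rcases h10 with h | h
        · exact absurd h hs
        · linarith
      have e1 : vhat 0 = 0 := by
        rcases h11 with h | h
        · exact absurd h hs
        · exact h
      rw [e0, e1] at hh
      nlinarith
    have hcross : vdq 0 * vhat 1 - vdq 1 * vhat 0 = 0 := by rw [← hyt]; exact hy0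
    have hfac : ((vhat 0 - vdq 0) ^ 2 + (vhat 1 - vdq 1) ^ 2) *
        ((vhat 0 + vdq 0) ^ 2 + (vhat 1 + vdq 1) ^ 2) = 0 := by
      linear_combination (vdq 0 ^ 2 + vdq 1 ^ 2 - vhat 0 ^ 2 - vhat 1 ^ 2) * hd -
        (vdq 0 ^ 2 + vdq 1 ^ 2 - vhat 0 ^ 2 - vhat 1 ^ 2) * hh +
        (4 * (vdq 0 * vhat 1 - vdq 1 * vhat 0)) * hcross
    clear hJ0 hJ1 hyt h1 h2 h10 h11 hΦy hy0 hcross hvdq hnorm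
    rcases mul_eq_zero.mp hfac with h | h
    · left
      refine ⟨?_, hω⟩
      have e0 : vhat 0 = vdq 0 := by nlinarith [sq_nonneg (vhat 0 - vdq 0), sq_nonneg (vhat 1 - vdq 1)]
      have e1 : vhat 1 = vdq 1 := by nlinarith [sq_nonneg (vhat 0 - vdq 0), sq_nonneg (vhat 1 - vdq 1)]
      funext i; fin_cases i <;> assumption
    · right
      refine ⟨?_, hω⟩
      have e0 : vhat 0 = -vdq 0 := by nlinarith [sq_nonneg (vhat 0 + vdq 0), sq_nonneg (vhat 1 + vdq 1)]
      have e1 : vhat 1 = -vdq 1 := by nlinarith [sq_nonneg (vhat 0 + vdq 0), sq_nonneg (vhat 1 + vdq 1)]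
      funext i; fin_cases i <;> simpa
  · rintro (⟨hv, hw⟩ | ⟨hv, hw⟩) <;>
    · have hy0 : ytilde = 0 := by
        rw [hyt, hv]
        try simp only [Pi.neg_apply]
        ring
      refine ⟨?_, by rw [hy0]; ring⟩
      rw [hy0, hΦ0, hw]
      have : -KP * 0 + ω - ω = 0 := by ring
      rw [this, zero_smul]
end

section
/- (Lyapunov decrease for the conventional SRF-PLL, Corollary 1.) Let V > 0, γ := √(3/2), ω ∈ ℝ, K_P, K_I > 0, and let v_dq⋆ := (γV, 0). Let (v̂, ω̂) : ℝ → ℝ² × ℝ be a differentiable solution of v̂'(t) = (û(t) − ω)·J₂·v̂(t), ω̂'(t) = −K_I·V̂_q(t), where v̂(t) = (V̂_d(t), V̂_q(t)) and û(t) := −K_P·V̂_q(t) + ω̂(t). Then the function W(t) := (1/2)‖v̂(t) − v_dq⋆‖² + (γV/(2K_I))(ω̂(t) − ω)² has derivative W'(t) = −K_P·γV·V̂_q(t)² ≤ 0 for all t. -/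
open Real Matrix

/-- Corollary 1: Lyapunov decrease for the conventional SRF-PLL.
Along any solution of v̂' = (û − ω)·J₂·v̂, ω̂' = −K_I·V̂_q with û = −K_P·V̂_q + ω̂,
the function W = (1/2)‖v̂ − v_dq⋆‖² + (γV/(2K_I))(ω̂ − ω)², v_dq⋆ = (γV, 0),
satisfies W' = −K_P·γV·V̂_q² ≤ 0. -/
theorem SRF_PLL_lyapunov (V ω KP KI : ℝ) (hV : 0 < V) (hKP : 0 < KP) (hKI : 0 < KI)
    (vhat : ℝ → Fin 2 → ℝ) (ωhat : ℝ → ℝ)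
    (hv : ∀ t, HasDerivAt vhat
      (((-KP * vhat t 1 + ωhat t) - ω) • (!![(0 : ℝ), -1; 1, 0]).mulVec (vhat t)) t)
    (hω : ∀ t, HasDerivAt ωhat (-KI * vhat t 1) t) :
    let γ : ℝ := Real.sqrt (3 / 2)
    let W : ℝ → ℝ := fun s =>
      (1 / 2) * ((vhat s 0 - γ * V) ^ 2 + (vhat s 1 - 0) ^ 2) +
        (γ * V / (2 * KI)) * (ωhat s - ω) ^ 2
    ∀ t, HasDerivAt W (-KP * (γ * V) * (vhat t 1) ^ 2) t ∧
      -KP * (γ * V) * (vhat t 1) ^ 2 ≤ 0 := by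
  intro γ W t
  have hγpos : 0 < γ := Real.sqrt_pos.mpr (by norm_num)
  have hv0 : HasDerivAt (fun s => vhat s 0)
      (((-KP * vhat t 1 + ωhat t) - ω) * (-(vhat t 1))) t := by
    have := (hasDerivAt_pi.mp (hv t)) 0
    simpa [Matrix.mulVec, dotProduct, Fin.sum_univ_two, smul_eq_mul] using this
  have hv1 : HasDerivAt (fun s => vhat s 1)
      (((-KP * vhat t 1 + ωhat t) - ω) * (vhat t 0)) t := by
    have := (hasDerivAt_pi.mp (hv t)) 1
    simpa [Matrix.mulVec, dotProduct, Fin.sum_univ_two, smul_eq_mul] using this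
  constructor
  · have hW : HasDerivAt W
        ((1/2) * (2 * (vhat t 0 - γ * V) ^ 1 * (((-KP * vhat t 1 + ωhat t) - ω) * (-(vhat t 1)))
          + 2 * (vhat t 1 - 0) ^ 1 * (((-KP * vhat t 1 + ωhat t) - ω) * (vhat t 0)))
          + (γ * V / (2 * KI)) * (2 * (ωhat t - ω) ^ 1 * (-KI * vhat t 1))) t := by
      exact (((((hv0.sub_const (γ * V)).pow 2).add
        ((hv1.sub_const 0).pow 2)).const_mul (1/2)).add
        ((((hω t).sub_const ω).pow 2).const_mul (γ * V / (2 * KI))))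
    convert hW using 1
    field_simp
    ring
  · have : 0 ≤ KP * (γ * V) * (vhat t 1) ^ 2 := by positivity
    linarith
end

section
/- (Proposition 4, Lyapunov part.) Let V > 0, γ := √(3/2), ω ∈ ℝ, K_P, K_I > 0, and let h be an even integer. Define W₁ʰ(δ, ω̂) := γV·(1 − cos(δ − hπ)) + (1/(2K_I))(ω̂ − ω)². Then: (i) W₁ʰ(hπ, ω) = 0 and W₁ʰ(δ, ω̂) > 0 for every (δ, ω̂) ∈ ((h−1)π, (h+1)π) × ℝ with (δ, ω̂) ≠ (hπ, ω); (ii) for every differentiable solution (δ, ω̂) : ℝ → ℝ² of the system δ' = −ω − K_P·γV·sin δ + ω̂, ω̂' = −K_I·γV·sin δ, the derivative of t ↦ W₁ʰ(δ(t), ω̂(t)) equals −K_P·γ²V²·sin²(δ(t) − hπ) ≤ 0 for all t; in particular t ↦ W₁ʰ(δ(t), ω̂(t)) is nonincreasing. -/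
open Real

/-- Proposition 4, Lyapunov part: for even h, the function
W₁ʰ(δ, ω̂) = γV(1 − cos(δ − hπ)) + (ω̂ − ω)²/(2K_I) is positive definite on
((h−1)π, (h+1)π) × ℝ about (hπ, ω), and along any solution of the SRF-PLL polar
dynamics its time derivative equals −K_P γ²V² sin²(δ − hπ) ≤ 0, so it is
nonincreasing. -/
theorem SRF_PLL_lyapunov_polar (V ω KP KI : ℝ) (hV : 0 < V) (hKP : 0 < KP)
    (hKI : 0 < KI) (h : ℤ) (hh : Even h) :
    let γ : ℝ := Real.sqrt (3 / 2)
    let W : ℝ × ℝ → ℝ := fun p =>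
      γ * V * (1 - Real.cos (p.1 - h * Real.pi)) + (1 / (2 * KI)) * (p.2 - ω) ^ 2
    (W (h * Real.pi, ω) = 0 ∧
      ∀ δ ωhat : ℝ, (h - 1 : ℝ) * Real.pi < δ → δ < (h + 1 : ℝ) * Real.pi →
        (δ, ωhat) ≠ ((h : ℝ) * Real.pi, ω) → 0 < W (δ, ωhat)) ∧
    (∀ (δ ωhat : ℝ → ℝ),
      (∀ t, HasDerivAt δ (-ω - KP * (γ * V) * Real.sin (δ t) + ωhat t) t) →
      (∀ t, HasDerivAt ωhat (-KI * (γ * V) * Real.sin (δ t)) t) →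
      (∀ t, HasDerivAt (fun s => W (δ s, ωhat s))
          (-KP * (γ ^ 2 * V ^ 2) * Real.sin (δ t - h * Real.pi) ^ 2) t ∧
        -KP * (γ ^ 2 * V ^ 2) * Real.sin (δ t - h * Real.pi) ^ 2 ≤ 0) ∧
      (∀ s t : ℝ, s ≤ t → W (δ t, ωhat t) ≤ W (δ s, ωhat s))) := by
  intro γ W
  obtain ⟨k, hk⟩ := hh
  have hγ : 0 < γ := Real.sqrt_pos.mpr (by norm_num)
  have hhπ : (h : ℝ) * Real.pi = (k : ℝ) * (2 * Real.pi) := by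
    push_cast [hk]; ring
  have hcosh : Real.cos ((h : ℝ) * Real.pi) = 1 := by
    rw [hhπ]; exact Real.cos_int_mul_two_pi k
  have hsinh : Real.sin ((h : ℝ) * Real.pi) = 0 := Real.sin_int_mul_pi h
  have hsin : ∀ x : ℝ, Real.sin (x - h * Real.pi) = Real.sin x := by
    intro x; rw [Real.sin_sub, hcosh, hsinh]; ring
  have hsq : γ ^ 2 = 3 / 2 := Real.sq_sqrt (by norm_num)
  constructor
  · constructor
    · simp [W]
    · intro δ ωhat h1 h2 hne
      have t2 : 0 ≤ (1 / (2 * KI)) * (ωhat - ω) ^ 2 := by positivity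
      by_cases hδ : δ = (h : ℝ) * Real.pi
      · have hω : ωhat ≠ ω := by
          intro hω; exact hne (by rw [hδ, hω])
        have : 0 < (1 / (2 * KI)) * (ωhat - ω) ^ 2 := by
          have : ωhat - ω ≠ 0 := sub_ne_zero.mpr hω
          positivity
        have hcos : Real.cos (δ - h * Real.pi) = 1 := by
          rw [hδ]; simp
        simp only [W, hcos]
        linarith
      · have hx1 : -(2 * Real.pi) < δ - h * Real.pi := by
          have := Real.pi_pos; nlinarith
        have hx2 : δ - h * Real.pi < 2 * Real.pi := by
          have := Real.pi_pos; nlinarith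
        have hne0 : δ - h * Real.pi ≠ 0 := sub_ne_zero.mpr hδ
        have hcos : Real.cos (δ - h * Real.pi) < 1 := by
          rcases lt_or_eq_of_le (Real.cos_le_one (δ - h * Real.pi)) with hlt | heq
          · exact hlt
          · exact absurd ((Real.cos_eq_one_iff_of_lt_of_lt hx1 hx2).mp heq) hne0
        have t1 : 0 < γ * V * (1 - Real.cos (δ - h * Real.pi)) := by
          have : 0 < 1 - Real.cos (δ - h * Real.pi) := by linarith
          positivity
        simp only [W]
        linarith
  · intro δ ωhat hδ' hω'
    have hasW : ∀ t, HasDerivAt (fun s => W (δ s, ωhat s))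
        (-KP * (γ ^ 2 * V ^ 2) * Real.sin (δ t - h * Real.pi) ^ 2) t := by
      intro t
      have h1 : HasDerivAt (fun s => γ * V * (1 - Real.cos (δ s - h * Real.pi)))
          (γ * V * (Real.sin (δ t - h * Real.pi) *
            (-ω - KP * (γ * V) * Real.sin (δ t) + ωhat t))) t := by
        have hd : HasDerivAt (fun s => δ s - h * Real.pi)
            (-ω - KP * (γ * V) * Real.sin (δ t) + ωhat t) t := (hδ' t).sub_const _
        have := (hd.cos).const_sub 1
        have := this.const_mul (γ * V)
        exact this.congr_deriv (by ring)
      have h2 : HasDerivAt (fun s => (1 / (2 * KI)) * (ωhat s - ω) ^ 2)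
          ((1 / (2 * KI)) * (2 * (ωhat t - ω) * (-KI * (γ * V) * Real.sin (δ t)))) t := by
        have hd : HasDerivAt (fun s => ωhat s - ω)
            (-KI * (γ * V) * Real.sin (δ t)) t := (hω' t).sub_const _
        have := (hd.pow 2).const_mul (1 / (2 * KI))
        exact this.congr_deriv (by ring)
      have := h1.add h2
      refine this.congr_deriv ?_
      rw [hsin (δ t)]
      field_simp
      ring
    refine ⟨fun t => ⟨hasW t, ?_⟩, ?_⟩
    · have : 0 ≤ KP * (γ ^ 2 * V ^ 2) * Real.sin (δ t - h * Real.pi) ^ 2 := by positivity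
      linarith
    · intro s t hst
      have hmono : Antitone (fun s => W (δ s, ωhat s)) := by
        apply antitone_of_deriv_nonpos
        · exact fun x => (hasW x).differentiableAt
        · intro x
          rw [(hasW x).deriv]
          have : 0 ≤ KP * (γ ^ 2 * V ^ 2) * Real.sin (δ x - h * Real.pi) ^ 2 := by positivity
          linarith
      exact hmono hst
end

section
/- (Lyapunov decrease for the generalized ATAN-PLL in polar coordinates, Proposition 6 / Corollary 2.) Let ω ∈ ℝ, K_P, K_I > 0, and let Φ : ℝ → ℝ satisfy Φ(0) = 0 and s·Φ(s) > 0 for all s ≠ 0. Let (δ, ω̂) : I → ℝ² be a differentiable solution, on an interval I with δ(t) ∈ (−π, π) for all t ∈ I, of the system δ' = −K_P·Φ(δ) + ω̂ − ω, ω̂' = −K_I·δ (the generalized ATAN-PLL error dynamics, in which the arctangent output ỹ₂ = atan2(γV sin δ, γV cos δ) equals δ on (−π, π)). Then the function W₂(t) := (1/2)δ(t)² + (1/(2K_I))(ω̂(t) − ω)² satisfies W₂'(t) = −K_P·Φ(δ(t))·δ(t) ≤ 0 for all t ∈ I; in particular W₂ is nonincreasing on I. -/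
open Real

/-- Proposition 6 / Corollary 2: Lyapunov decrease for the
generalized ATAN-PLL in polar coordinates. On an interval I where δ stays in
(−π, π), along solutions of δ' = −K_P Φ(δ) + ω̂ − ω, ω̂' = −K_I δ, the function
W₂ = (1/2)δ² + (ω̂ − ω)²/(2K_I) satisfies W₂' = −K_P Φ(δ)δ ≤ 0; in particular
W₂ is nonincreasing on I. -/
theorem gATAN_PLL_lyapunov (ω KP KI : ℝ) (hKP : 0 < KP) (hKI : 0 < KI)
    (Φ : ℝ → ℝ) (hΦ0 : Φ 0 = 0) (hΦ : ∀ s : ℝ, s ≠ 0 → 0 < Φ s * s)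
    (I : Set ℝ) (hI : Convex ℝ I) (δ ωhat : ℝ → ℝ)
    (hδ : ∀ t ∈ I, HasDerivAt δ (-KP * Φ (δ t) + ωhat t - ω) t)
    (hω : ∀ t ∈ I, HasDerivAt ωhat (-KI * δ t) t)
    (hrange : ∀ t ∈ I, δ t ∈ Set.Ioo (-Real.pi) Real.pi) :
    let W₂ : ℝ → ℝ := fun s => (1 / 2) * (δ s) ^ 2 + (1 / (2 * KI)) * (ωhat s - ω) ^ 2
    (∀ t ∈ I, HasDerivAt W₂ (-KP * Φ (δ t) * δ t) t ∧ -KP * Φ (δ t) * δ t ≤ 0) ∧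
    (∀ s ∈ I, ∀ t ∈ I, s ≤ t → W₂ t ≤ W₂ s) := by
  intro W₂
  have hKI' : (KI : ℝ) ≠ 0 := ne_of_gt hKI
  have hderiv : ∀ t ∈ I, HasDerivAt W₂ (-KP * Φ (δ t) * δ t) t := by
    intro t ht
    have h1 := (((hδ t ht).pow 2).const_mul ((1 : ℝ) / 2))
    have h2 := ((((hω t ht).sub_const ω).pow 2).const_mul ((1 : ℝ) / (2 * KI)))
    have h : HasDerivAt W₂ _ t := h1.add h2
    convert h using 1
    push_cast
    field_simp
    ring
  have hsign : ∀ t ∈ I, -KP * Φ (δ t) * δ t ≤ 0 := by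
    intro t ht
    rcases eq_or_ne (δ t) 0 with h0 | h0
    · simp [h0, hΦ0]
    · have := hΦ (δ t) h0
      nlinarith
  refine ⟨fun t ht => ⟨hderiv t ht, hsign t ht⟩, ?_⟩
  intro s hs t ht hst
  have : AntitoneOn W₂ I := by
    refine antitoneOn_of_deriv_nonpos hI
      (fun x hx => ((hderiv x hx).continuousAt).continuousWithinAt)
      (fun x hx => ((hderiv x (interior_subset hx)).differentiableAt).differentiableWithinAt)
      (fun x hx => ?_)
    have hx' : x ∈ I := interior_subset hx
    rw [(hderiv x hx').deriv]
    exact hsign x hx'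
  exact this hs ht hst
end

section
/- (Proposition 7, Lyapunov part.) Let V > 0, γ := √(3/2), ω ∈ ℝ, K_P, K_I > 0, and let h be an even integer. Let (δ, ω̂) : I → ℝ² be a differentiable solution, on an interval I with δ(t) ∈ (hπ − π, hπ + π) for all t ∈ I, of the system δ' = −K_P·atan2(γV sin δ, γV cos δ) + ω̂ − ω, ω̂' = −K_I·atan2(γV sin δ, γV cos δ). Then, since atan2(γV sin δ, γV cos δ) = δ − hπ for δ ∈ (hπ − π, hπ + π), the function W₂ʰ(t) := (1/2)(δ(t) − hπ)² + (1/(2K_I))(ω̂(t) − ω)² satisfies W₂ʰ'(t) = −K_P·(δ(t) − hπ)² ≤ 0 for all t ∈ I; in particular W₂ʰ is nonincreasing on I. -/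
open Real Complex

lemma arg_aux_ATAN (r : ℝ) (hr : 0 < r) (h : ℤ) (hh : Even h) (d : ℝ)
    (hd : d ∈ Set.Ioo ((h : ℝ) * Real.pi - Real.pi) ((h : ℝ) * Real.pi + Real.pi)) :
    Complex.arg ((r * Real.cos d : ℝ) + (r * Real.sin d : ℝ) * Complex.I)
      = d - (h : ℝ) * Real.pi := by
  obtain ⟨k, hk⟩ := hh
  have hd' : d = (d - (h : ℝ) * Real.pi) + (k : ℤ) * (2 * Real.pi) := by
    subst hk; push_cast; ring
  have hcos : Real.cos d = Real.cos (d - (h : ℝ) * Real.pi) := by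
    conv_lhs => rw [hd']
    rw [Real.cos_add_int_mul_two_pi]
  have hsin : Real.sin d = Real.sin (d - (h : ℝ) * Real.pi) := by
    conv_lhs => rw [hd']
    rw [Real.sin_add_int_mul_two_pi]
  have hmem : d - (h : ℝ) * Real.pi ∈ Set.Ioc (-Real.pi) Real.pi := by
    constructor
    · linarith [hd.1]
    · linarith [hd.2]
  have heq : ((r * Real.cos d : ℝ) : ℂ) + ((r * Real.sin d : ℝ) : ℂ) * Complex.I
      = (r : ℂ) * (Complex.cos ((d - (h : ℝ) * Real.pi : ℝ) : ℂ)
        + Complex.sin ((d - (h : ℝ) * Real.pi : ℝ) : ℂ) * Complex.I) := by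
    rw [hcos, hsin]
    push_cast [Complex.ofReal_cos, Complex.ofReal_sin]
    ring
  rw [heq]
  exact Complex.arg_mul_cos_add_sin_mul_I hr hmem

/-- Proposition 7, Lyapunov part: for even h, on an interval I
where δ stays in (hπ − π, hπ + π) (so that atan2(γV sin δ, γV cos δ) = δ − hπ),
along solutions of the ATAN-PLL polar dynamics the function
W₂ʰ = (1/2)(δ − hπ)² + (ω̂ − ω)²/(2K_I) satisfies W₂ʰ' = −K_P(δ − hπ)² ≤ 0;
in particular W₂ʰ is nonincreasing on I. -/
theorem ATAN_PLL_lyapunov_polar (V ω KP KI : ℝ) (hV : 0 < V) (hKP : 0 < KP)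
    (hKI : 0 < KI) (h : ℤ) (hh : Even h)
    (I : Set ℝ) (hI : Convex ℝ I) (δ ωhat : ℝ → ℝ)
    (hrange : ∀ t ∈ I, δ t ∈ Set.Ioo ((h : ℝ) * Real.pi - Real.pi) ((h : ℝ) * Real.pi + Real.pi))
    (hδ : ∀ t ∈ I, HasDerivAt δ
      (-KP * Complex.arg ((Real.sqrt (3 / 2) * V * Real.cos (δ t) : ℝ) +
          (Real.sqrt (3 / 2) * V * Real.sin (δ t) : ℝ) * Complex.I) + ωhat t - ω) t)
    (hω : ∀ t ∈ I, HasDerivAt ωhat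
      (-KI * Complex.arg ((Real.sqrt (3 / 2) * V * Real.cos (δ t) : ℝ) +
          (Real.sqrt (3 / 2) * V * Real.sin (δ t) : ℝ) * Complex.I)) t) :
    let W : ℝ → ℝ := fun s =>
      (1 / 2) * (δ s - (h : ℝ) * Real.pi) ^ 2 + (1 / (2 * KI)) * (ωhat s - ω) ^ 2
    (∀ t ∈ I, HasDerivAt W (-KP * (δ t - (h : ℝ) * Real.pi) ^ 2) t ∧
        -KP * (δ t - (h : ℝ) * Real.pi) ^ 2 ≤ 0) ∧
    (∀ s ∈ I, ∀ t ∈ I, s ≤ t → W t ≤ W s) := by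
  intro W
  have hr : 0 < Real.sqrt (3 / 2) * V :=
    mul_pos (Real.sqrt_pos.mpr (by norm_num)) hV
  have harg : ∀ t ∈ I,
      Complex.arg ((Real.sqrt (3 / 2) * V * Real.cos (δ t) : ℝ) +
          (Real.sqrt (3 / 2) * V * Real.sin (δ t) : ℝ) * Complex.I)
        = δ t - (h : ℝ) * Real.pi := by
    intro t ht
    have := arg_aux_ATAN (Real.sqrt (3 / 2) * V) hr h hh (δ t) (hrange t ht)
    simpa [mul_assoc] using this
  have hW : ∀ t ∈ I, HasDerivAt W (-KP * (δ t - (h : ℝ) * Real.pi) ^ 2) t := by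
    intro t ht
    have hδt : HasDerivAt δ (-KP * (δ t - (h : ℝ) * Real.pi) + ωhat t - ω) t := by
      have := hδ t ht; rwa [harg t ht] at this
    have hωt : HasDerivAt ωhat (-KI * (δ t - (h : ℝ) * Real.pi)) t := by
      have := hω t ht; rwa [harg t ht] at this
    have h1 : HasDerivAt (fun s => (1 / 2) * (δ s - (h : ℝ) * Real.pi) ^ 2)
        ((1 / 2) * (2 * (δ t - (h : ℝ) * Real.pi) ^ 1 *
          (-KP * (δ t - (h : ℝ) * Real.pi) + ωhat t - ω))) t :=
      ((hδt.sub_const _).pow 2).const_mul _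
    have h2 : HasDerivAt (fun s => (1 / (2 * KI)) * (ωhat s - ω) ^ 2)
        ((1 / (2 * KI)) * (2 * (ωhat t - ω) ^ 1 *
          (-KI * (δ t - (h : ℝ) * Real.pi)))) t :=
      ((hωt.sub_const _).pow 2).const_mul _
    have := h1.add h2
    refine this.congr_deriv ?_
    field_simp
    ring
  refine ⟨fun t ht => ⟨hW t ht, ?_⟩, ?_⟩
  · have : 0 ≤ KP * (δ t - (h : ℝ) * Real.pi) ^ 2 :=
      mul_nonneg hKP.le (sq_nonneg _)
    linarith
  · intro s hs t ht hst
    have hsub : Set.Icc s t ⊆ I := hI.ordConnected.out hs ht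
    have hanti : AntitoneOn W (Set.Icc s t) := by
      apply antitoneOn_of_deriv_nonpos (convex_Icc s t)
      · exact fun x hx => (hW x (hsub hx)).continuousAt.continuousWithinAt
      · intro x hx
        exact (hW x (hsub (interior_subset hx))).differentiableAt.differentiableWithinAt
      · intro x hx
        rw [(hW x (hsub (interior_subset hx))).deriv]
        have : 0 ≤ KP * (δ x - (h : ℝ) * Real.pi) ^ 2 :=
          mul_nonneg hKP.le (sq_nonneg _)
        linarith
    exact hanti (Set.left_mem_Icc.mpr hst) (Set.right_mem_Icc.mpr hst) hst
end

section
/- (Proposition 8, dissipation inequality under bounded rate of change of frequency.) Let K_P, K_I > 0 and η_max > 0. Then there exist a positive definite quadratic form W : ℝ² → ℝ (i.e. W(0,0) = 0 and W(x) > 0 for x ≠ 0) and constants c₁, c₂ > 0 such that for every continuous disturbance η : ℝ → ℝ with |η(t)| ≤ η_max for all t, and every differentiable solution (δ, ω̃) : I → ℝ² of the perturbed ATAN-PLL error dynamics δ' = −K_P·δ + ω̃, ω̃' = −K_I·δ − η(t) on an interval I with δ(t) ∈ (−π, π) for all t ∈ I, one has for all t ∈ I: (d/dt) W(δ(t), ω̃(t))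 ≤ −c₁·‖(δ(t), ω̃(t))‖² + c₂·η_max·‖(δ(t), ω̃(t))‖; consequently (d/dt) W(δ(t), ω̃(t)) < 0 whenever ‖(δ(t), ω̃(t))‖ > (c₂/c₁)·η_max. -/
open Real

set_option maxHeartbeats 1000000

/-- Proposition 8, dissipation inequality: for gains
K_P, K_I > 0 and a RoCoF bound η_max > 0, there exist a positive definite
quadratic form W (given by coefficients a, b, c) and constants c₁, c₂ > 0 such
that along every solution of δ' = −K_P δ + ω̃, ω̃' = −K_I δ − η(t), with
|η| ≤ η_max and δ ∈ (−π, π) on I, one has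
(d/dt) W(δ, ω̃) ≤ −c₁‖(δ, ω̃)‖² + c₂ η_max ‖(δ, ω̃)‖, hence (d/dt) W < 0
whenever ‖(δ, ω̃)‖ > (c₂/c₁) η_max. -/
theorem ATAN_PLL_ultimate_bound (KP KI ηmax : ℝ) (hKP : 0 < KP) (hKI : 0 < KI)
    (hη : 0 < ηmax) :
    ∃ a b c c₁ c₂ : ℝ, 0 < c₁ ∧ 0 < c₂ ∧
      (a * 0 ^ 2 + b * 0 * 0 + c * 0 ^ 2 = 0) ∧
      (∀ x y : ℝ, (x, y) ≠ (0, 0) → 0 < a * x ^ 2 + b * x * y + c * y ^ 2) ∧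
      ∀ (η : ℝ → ℝ), Continuous η → (∀ t, |η t| ≤ ηmax) →
        ∀ (I : Set ℝ) (δ ωt : ℝ → ℝ),
          (∀ t ∈ I, HasDerivAt δ (-KP * δ t + ωt t) t) →
          (∀ t ∈ I, HasDerivAt ωt (-KI * δ t - η t) t) →
          (∀ t ∈ I, δ t ∈ Set.Ioo (-Real.pi) Real.pi) →
          ∀ t ∈ I,
            deriv (fun s => a * (δ s) ^ 2 + b * (δ s) * (ωt s) + c * (ωt s) ^ 2) t ≤
              -c₁ * ((δ t) ^ 2 + (ωt t) ^ 2) +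
                c₂ * ηmax * Real.sqrt ((δ t) ^ 2 + (ωt t) ^ 2) ∧
            ((c₂ / c₁) * ηmax < Real.sqrt ((δ t) ^ 2 + (ωt t) ^ 2) →
              deriv (fun s => a * (δ s) ^ 2 + b * (δ s) * (ωt s) + c * (ωt s) ^ 2) t < 0) := by
  set D : ℝ := KP ^ 2 + KI + KI * KP + 1 with hDdef
  have hD : 0 < D := by positivity
  set ε : ℝ := KI * KP / D with hεdef
  have hε : 0 < ε := by positivity
  have hε1 : ε < 1 := by
    rw [hεdef, div_lt_one hD]; nlinarith
  have hεKP : ε * KP < KI := by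
    rw [hεdef, div_mul_eq_mul_div, div_lt_iff₀ hD]
    nlinarith [mul_pos hKI hKI, mul_pos (mul_pos hKI hKI) hKP]
  have hεbig : ε * (KP ^ 2 + KI) < KI * KP := by
    rw [hεdef, div_mul_eq_mul_div, div_lt_iff₀ hD]; nlinarith [mul_pos hKI hKP]
  set a : ℝ := KI - ε * KP / 2 with hadef
  have ha : 0 < a := by rw [hadef]; nlinarith
  -- m₁ is the coefficient of -δ² in the quadratic part of Ẇ
  have hεKIKP : ε ≤ KI * KP := by
    rw [hεdef, div_le_iff₀ hD]; nlinarith [mul_pos hKI hKP]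
  have hm₁ : ε ≤ 2 * a * KP - ε * KI := by
    have : KI * KP ≤ 2 * a * KP - ε * KI := by rw [hadef]; nlinarith
    linarith
  clear_value D ε a
  refine ⟨a, -ε, 1, ε, 3, hε, by norm_num, by ring, ?_, ?_⟩
  · -- positive definiteness
    intro x y hxy
    have h4a : ε ^ 2 < 4 * a := by
      have hε2 : ε ^ 2 < ε := by nlinarith
      rw [hadef]; nlinarith
    rcases eq_or_ne y 0 with hy | hy
    · have hx : x ≠ 0 := by
        intro hx; exact hxy (by rw [hx, hy])
      have := mul_pos ha (pow_pos (abs_pos.mpr hx) 2)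
      rw [hy]
      have : 0 < a * x ^ 2 := by positivity
      nlinarith
    · nlinarith [sq_nonneg (2 * a * x - ε * y), mul_pos (sub_pos.mpr h4a) (pow_pos (abs_pos.mpr hy) 2), sq_abs y]
  · intro η hηc hηb I δ ωt hδ hω hδrange t ht
    have h1 := hδ t ht
    have h2 := hω t ht
    -- derivative of W along the trajectory
    have hW : HasDerivAt (fun s => a * (δ s) ^ 2 + (-ε) * (δ s) * (ωt s) + 1 * (ωt s) ^ 2)
        (a * (2 * δ t ^ 1 * (-KP * δ t + ωt t))
          + ((-ε) * (-KP * δ t + ωt t) * ωt t + (-ε) * δ t * (-KI * δ t - η t))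
          + 1 * (2 * ωt t ^ 1 * (-KI * δ t - η t))) t := by
      have hA : HasDerivAt (fun s => a * (δ s) ^ 2) (a * (2 * δ t ^ 1 * (-KP * δ t + ωt t))) t :=
        (h1.pow 2).const_mul a
      have hB : HasDerivAt (fun s => (-ε) * (δ s) * (ωt s))
          ((-ε) * (-KP * δ t + ωt t) * ωt t + (-ε) * δ t * (-KI * δ t - η t)) t :=
        ((h1.const_mul (-ε)).mul h2)
      have hC : HasDerivAt (fun s => 1 * (ωt s) ^ 2) (1 * (2 * ωt t ^ 1 * (-KI * δ t - η t))) t :=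
        (h2.pow 2).const_mul 1
      exact (hA.add hB).add hC
    rw [hW.deriv]
    set x := δ t
    set y := ωt t
    set r := Real.sqrt (x ^ 2 + y ^ 2) with hrdef
    clear_value x y
    clear_value r
    have hr0 : 0 ≤ r := hrdef ▸ Real.sqrt_nonneg _
    have hxr : |x| ≤ r := by
      rw [hrdef, ← Real.sqrt_sq_eq_abs]
      exact Real.sqrt_le_sqrt (by nlinarith [sq_nonneg y])
    have hyr : |y| ≤ r := by
      rw [hrdef, ← Real.sqrt_sq_eq_abs]
      exact Real.sqrt_le_sqrt (by nlinarith [sq_nonneg x])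
    -- the value of the derivative
    have hval : a * (2 * x ^ 1 * (-KP * x + y))
          + ((-ε) * (-KP * x + y) * y + (-ε) * x * (-KI * x - η t))
          + 1 * (2 * y ^ 1 * (-KI * x - η t))
        = -(2 * a * KP - ε * KI) * x ^ 2 + (2 * a + ε * KP - 2 * KI) * x * y - ε * y ^ 2
          + (ε * x - 2 * y) * η t := by ring
    have hcross : 2 * a + ε * KP - 2 * KI = 0 := by rw [hadef]; ring
    -- bound the disturbance term
    have hdist : (ε * x - 2 * y) * η t ≤ 3 * ηmax * r := by
      calc (ε * x - 2 * y) * η t ≤ |(ε * x - 2 * y) * η t| := le_abs_self _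
        _ = |ε * x - 2 * y| * |η t| := abs_mul _ _
        _ ≤ (ε * |x| + 2 * |y|) * ηmax := by
            refine mul_le_mul ?_ (hηb t) (abs_nonneg _) (by positivity)
            calc |ε * x - 2 * y| ≤ |ε * x| + |2 * y| := abs_sub _ _
              _ = ε * |x| + 2 * |y| := by
                  rw [abs_mul, abs_mul, abs_of_pos hε]; norm_num
        _ ≤ 3 * ηmax * r := by
            have e1 : ε * |x| * ηmax ≤ |x| * ηmax :=
              mul_le_mul_of_nonneg_right
                (mul_le_of_le_one_left (abs_nonneg x) hε1.le) hη.le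
            have e2 : |x| * ηmax ≤ r * ηmax :=
              mul_le_mul_of_nonneg_right hxr hη.le
            have e3 : |y| * ηmax ≤ r * ηmax :=
              mul_le_mul_of_nonneg_right hyr hη.le
            nlinarith
    have hmain : a * (2 * x ^ 1 * (-KP * x + y))
          + ((-ε) * (-KP * x + y) * y + (-ε) * x * (-KI * x - η t))
          + 1 * (2 * y ^ 1 * (-KI * x - η t))
        ≤ -ε * (x ^ 2 + y ^ 2) + 3 * ηmax * r := by
      rw [hval, hcross]
      have hq : -(2 * a * KP - ε * KI) * x ^ 2 ≤ -ε * x ^ 2 := by nlinarith [sq_nonneg x]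
      nlinarith
    refine ⟨hmain, fun hgt => ?_⟩
    have hrpos : 0 < r := lt_of_le_of_lt (by positivity) hgt
    have h3 : 3 * ηmax < ε * r := by
      rw [div_mul_eq_mul_div, div_lt_iff₀ hε] at hgt
      nlinarith
    have hr2 : r ^ 2 = x ^ 2 + y ^ 2 := hrdef ▸ Real.sq_sqrt (by positivity)
    have hneg : -ε * (x ^ 2 + y ^ 2) + 3 * ηmax * r < 0 := by nlinarith
    exact lt_of_le_of_lt hmain hneg
end
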